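/- Let A be a memory interval and let B₁,…,B_k be all branches of T intersecting A, ordered left-to-right. Then the sequence of depths of the topmost vertices of these branches contained in A, namely (min_{v ∈ B_i ∩ A} d(v)) for i = 1,…,k, is non-increasing. -/

import Mathlib

namespace VEB

inductive OTree : Type where
  | node : List OTree → OTree

def OTree.children : OTree → List OTree
  | .node cs => cs

mutual
  def height : OTree → ℕ
    | .node cs => 1 + heightList cs
  def heightList : List OTree → ℕ
    | [] => 0
    | c :: cs => max (height c) (heightList cs)
end

def subtreeAt? : OTree → List ℕ → Option OTree
  | t, [] => some t
  | t, i :: p =>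
    match t.children[i]? with
    | some c => subtreeAt? c p
    | none => none

/-- `p` is (the path of) a vertex of `t`. -/
def IsVertex (t : OTree) (p : List ℕ) : Prop := (subtreeAt? t p).isSome

/-- `p` is a leaf of `t`. -/
def IsLeaf (t : OTree) (p : List ℕ) : Prop := subtreeAt? t p = some (.node [])

/-- All leaves of `t` are at the same depth (the bottom level). -/
def Uniform (t : OTree) : Prop := ∀ p, IsLeaf t p → p.length + 1 = height t

/-- The top `m+1` levels of `t` (the truncation of height `m+1`). -/
def trunc : ℕ → OTree → OTree
  | 0, _ => .node []
  | m+1, t => .node (t.children.map (trunc m))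

/-- Paths of the vertices at depth `m`, in left-to-right order. -/
def levelPaths : ℕ → OTree → List (List ℕ)
  | 0, _ => [[]]
  | m+1, t => (t.children.zipIdx.map fun ic => (levelPaths m ic.1).map (ic.2 :: ·)).flatten

/-- The level at which a tree of height `h` is cut: `max ⌊ε h⌋ 1`. -/
noncomputable def cutLevel (ε : ℝ) (h : ℕ) : ℕ := max ⌊ε * (h : ℝ)⌋₊ 1

/-- The van Emde Boas order of the vertex paths of `t` (with recursion fuel). -/
noncomputable def vEBAux (ε : ℝ) : ℕ → OTree → List (List ℕ)
  | 0, _ => []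
  | fuel+1, t =>
    if height t ≤ 1 then [[]]
    else
      let m := cutLevel ε (height t)
      vEBAux ε fuel (trunc (m - 1) t) ++
        ((levelPaths m t).map fun q =>
          match subtreeAt? t q with
          | some s => (vEBAux ε fuel s).map (q ++ ·)
          | none => []).flatten

/-- The van Emde Boas order `vEB_ε(t)` of the vertex paths of `t`. -/
noncomputable def vEB (ε : ℝ) (t : OTree) : List (List ℕ) := vEBAux ε (height t) t

/-- Position (index) of vertex `p` in the van Emde Boas order. -/
noncomputable def pos (ε : ℝ) (t : OTree) (p : List ℕ) : ℕ := (vEB ε t).idxOf p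

/-- `A` is a set of vertices occupying consecutive positions in `vEB_ε(t)`. -/
def MemInterval (ε : ℝ) (t : OTree) (A : Set (List ℕ)) : Prop :=
  ∃ i n, A = {p | p ∈ ((vEB ε t).drop i).take n}

/-- The vertices of the decomposition `D` of `t`: pairs `(p, k)` of the root path
and the height of a decomposition subtree (with recursion fuel). -/
noncomputable def decompAux (ε : ℝ) : ℕ → OTree → List (List ℕ × ℕ)
  | 0, _ => []
  | fuel+1, t =>
    if height t ≤ 1 then [([], 1)]
    else
      let m := cutLevel ε (height t)
      ([], height t) ::
        (decompAux ε fuel (trunc (m - 1) t) ++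
          ((levelPaths m t).map fun q =>
            match subtreeAt? t q with
            | some s => (decompAux ε fuel s).map fun r => (q ++ r.1, r.2)
            | none => []).flatten)

/-- The vertices of the decomposition `D` of `t`. -/
noncomputable def decompVerts (ε : ℝ) (t : OTree) : List (List ℕ × ℕ) :=
  decompAux ε (height t) t

/-- The children in the decomposition tree `D` of the decomposition vertex `(p, k)`:
the top tree followed by the bottom trees in left-to-right order. -/
noncomputable def dChildren (ε : ℝ) (t : OTree) (p : List ℕ) (k : ℕ) : List (List ℕ × ℕ) :=
  if k ≤ 1 then []
  else
    match subtreeAt? t p with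
    | some s =>
      (p, cutLevel ε k) ::
        (levelPaths (cutLevel ε k) s).map fun q => (p ++ q, k - cutLevel ε k)
    | none => []

/-- The decomposition subtree `(p, k)` contains the vertex `w` of `t`;
equivalently, the leaf `{w}` of `D` lies in the subtree of `D` rooted at `(p, k)`. -/
def DContains (p : List ℕ) (k : ℕ) (w : List ℕ) : Prop :=
  p <+: w ∧ w.length < p.length + k

/-- Vertex `v` is to the left of the branch with leaf `ℓ`. -/
def LeftOfBranch (v ℓ : List ℕ) : Prop := List.Lex (· < ·) v (ℓ.take v.length)

/-- Vertex `v` is to the right of the branch with leaf `ℓ`. -/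
def RightOfBranch (v ℓ : List ℕ) : Prop := List.Lex (· < ·) (ℓ.take v.length) v

/-- Every internal vertex of `t` has at least `a` children. -/
def MinArity (t : OTree) (a : ℕ) : Prop :=
  ∀ p s, subtreeAt? t p = some s → s.children ≠ [] → a ≤ s.children.length

/-- Every internal vertex of `t` has at most `b` children. -/
def MaxArity (t : OTree) (b : ℕ) : Prop :=
  ∀ p s, subtreeAt? t p = some s → s.children.length ≤ b

/-- `w` lies on the leftmost branch descending from `v` (always taking the leftmost child). -/
def OnLeftmostBranch (v w : List ℕ) : Prop :=
  v <+: w ∧ ∀ n (hn : n < w.length), v.length ≤ n → w.get ⟨n, hn⟩ = 0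

/-- `w` lies on the rightmost branch descending from `v` (always taking the rightmost child). -/
def OnRightmostBranch (t : OTree) (v w : List ℕ) : Prop :=
  v <+: w ∧ ∀ n (hn : n < w.length), v.length ≤ n →
    ∀ s, subtreeAt? t (w.take n) = some s → w.get ⟨n, hn⟩ + 1 = s.children.length


/-!
The van Emde Boas order lists the top tree before the bottom trees and the bottom trees from
left to right, so whenever `v` comes before `w` in it, `v` is an ancestor of `w`, lies to the
left of `w`, or is strictly shallower (`VEBPrecedes`). Let `d₁ < d₂` be the topmost depths in `A`
of branches `ℓ₁` left of `ℓ₂`. The depth-`d₁` vertex of `ℓ₂` cannot come before the depth-`d₁`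
vertex of `ℓ₁` (it lies to its right at the same depth) nor after the depth-`d₂` vertex of `ℓ₂`
(it is its ancestor), so it lies in the interval `A`, contradicting the minimality of `d₂`.
-/

lemma height_node (cs : List OTree) : height (.node cs) = 1 + heightList cs := by
  rw [height]

lemma height_pos (t : OTree) : 0 < height t := by
  cases t with | node cs => rw [height_node]; omega

lemma height_le_heightList {cs : List OTree} {c : OTree} (h : c ∈ cs) :
    height c ≤ heightList cs := by
  induction cs with
  | nil => cases h
  | cons d cs ih =>
    rw [heightList]
    rcases List.mem_cons.1 h with rfl | h
    · exact le_max_left _ _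
    · exact (ih h).trans (le_max_right _ _)

lemma heightList_le {cs : List OTree} {n : ℕ} (h : ∀ c ∈ cs, height c ≤ n) :
    heightList cs ≤ n := by
  induction cs with
  | nil => rw [heightList]; omega
  | cons c cs ih =>
    rw [heightList]
    exact max_le (h c List.mem_cons_self) (ih fun d hd => h d (List.mem_cons_of_mem _ hd))

lemma height_lt_of_getElem?_children {t : OTree} {i : ℕ} {c : OTree}
    (h : t.children[i]? = some c) : height c < height t := by
  cases t with | node cs =>
  have := height_le_heightList (List.mem_of_getElem? (l := cs) h)
  rw [height_node]
  omega

lemma children_eq_nil_of_height_le_one {t : OTree} (h : height t ≤ 1) : t.children = [] := by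
  cases t with | node cs =>
  cases cs with
  | nil => rfl
  | cons c cs =>
    have := height_le_heightList (List.mem_cons_self (a := c) (l := cs))
    have := height_pos c
    rw [height_node] at h
    omega

lemma subtreeAt?_append (t : OTree) (p q : List ℕ) :
    subtreeAt? t (p ++ q) = (subtreeAt? t p).bind (subtreeAt? · q) := by
  induction p generalizing t with
  | nil => simp [subtreeAt?]
  | cons i p ih =>
    rw [List.cons_append, subtreeAt?, subtreeAt?]
    cases t.children[i]? with
    | none => rfl
    | some c => exact ih c

lemma isSome_subtreeAt?_of_prefix {t : OTree} {p q : List ℕ} (hpq : p <+: q)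
    (hq : (subtreeAt? t q).isSome) : (subtreeAt? t p).isSome := by
  obtain ⟨r, rfl⟩ := hpq
  rw [subtreeAt?_append] at hq
  cases hp : subtreeAt? t p with
  | none => simp [hp] at hq
  | some s => rfl

lemma length_add_height_le {t : OTree} {p : List ℕ} {s : OTree}
    (h : subtreeAt? t p = some s) : p.length + height s ≤ height t := by
  induction p generalizing t with
  | nil => cases h; simp
  | cons i p ih =>
    rw [subtreeAt?] at h
    cases hc : t.children[i]? with
    | none => simp [hc] at h
    | some c =>
      rw [hc] at h
      have := ih h
      have := height_lt_of_getElem?_children hc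
      simp only [List.length_cons]
      omega

lemma height_trunc_le (k : ℕ) (t : OTree) : height (trunc k t) ≤ k + 1 := by
  induction k generalizing t with
  | zero => rw [trunc, height_node, heightList]
  | succ m ih =>
    rw [trunc, height_node]
    have : heightList (t.children.map (trunc m)) ≤ m + 1 := by
      refine heightList_le fun c hc => ?_
      obtain ⟨d, _, rfl⟩ := List.mem_map.1 hc
      exact ih d
    omega

lemma height_trunc_le_height (k : ℕ) (t : OTree) : height (trunc k t) ≤ height t := by
  induction k generalizing t with
  | zero => rw [trunc, height_node, heightList]; exact height_pos t
  | succ m ih =>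
    cases t with | node cs =>
    rw [trunc, height_node, height_node, OTree.children]
    have : heightList (cs.map (trunc m)) ≤ heightList cs := by
      refine heightList_le fun c hc => ?_
      obtain ⟨d, hd, rfl⟩ := List.mem_map.1 hc
      exact (ih d).trans (height_le_heightList hd)
    omega

lemma isSome_subtreeAt?_trunc {p : List ℕ} {k : ℕ} {t : OTree} (hl : p.length ≤ k)
    (h : (subtreeAt? t p).isSome) : (subtreeAt? (trunc k t) p).isSome := by
  induction p generalizing k t with
  | nil => rfl
  | cons i p ih =>
    obtain ⟨m, rfl⟩ : ∃ m, k = m + 1 := Nat.exists_eq_add_one.2 (by simp at hl; omega)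
    rw [subtreeAt?] at h
    rw [trunc, subtreeAt?, OTree.children, List.getElem?_map]
    cases hc : t.children[i]? with
    | none => simp [hc] at h
    | some c =>
      rw [hc] at h
      exact ih (by simpa using hl) h

lemma mem_levelPaths {m : ℕ} {t : OTree} {q : List ℕ} :
    q ∈ levelPaths m t ↔ (subtreeAt? t q).isSome ∧ q.length = m := by
  induction m generalizing t q with
  | zero =>
    rw [levelPaths, List.mem_singleton, List.length_eq_zero_iff]
    constructor
    · rintro rfl; exact ⟨rfl, rfl⟩
    · exact And.right
  | succ m ih =>
    rw [levelPaths]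
    simp only [List.mem_flatten, List.mem_map]
    constructor
    · rintro ⟨l, ⟨⟨c, i⟩, hic, rfl⟩, hq⟩
      obtain ⟨q', hq', rfl⟩ := List.mem_map.1 hq
      have hc : t.children[i]? = some c := List.mem_zipIdx_iff_getElem?.1 hic
      obtain ⟨h1, h2⟩ := ih.1 hq'
      refine ⟨?_, by simp [h2]⟩
      rwa [subtreeAt?, hc]
    · rintro ⟨h1, h2⟩
      cases q with
      | nil => simp at h2
      | cons i q' =>
        rw [subtreeAt?] at h1
        cases hc : t.children[i]? with
        | none => simp [hc] at h1
        | some c =>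
          rw [hc] at h1
          exact ⟨_, ⟨⟨c, i⟩, List.mem_zipIdx_iff_getElem?.2 hc, rfl⟩,
            List.mem_map_of_mem (ih.2 ⟨h1, by simpa using h2⟩)⟩

lemma pairwise_lex_levelPaths (m : ℕ) (t : OTree) :
    (levelPaths m t).Pairwise (List.Lex (· < ·)) := by
  induction m generalizing t with
  | zero => simp [levelPaths]
  | succ m ih =>
    rw [levelPaths, List.pairwise_flatten]
    constructor
    · rintro l hl
      obtain ⟨⟨c, i⟩, _, rfl⟩ := List.mem_map.1 hl
      exact (ih c).map _ fun _ _ h => List.Lex.cons h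
    · have hidx : t.children.zipIdx.Pairwise (fun a b => a.2 < b.2) := by
        rw [← List.pairwise_map (f := Prod.snd), List.zipIdx_map_snd]
        exact List.pairwise_lt_range' 1
      refine hidx.map _ ?_
      rintro ⟨c, i⟩ ⟨d, j⟩ hij x hx y hy
      obtain ⟨q, _, rfl⟩ := List.mem_map.1 hx
      obtain ⟨r, _, rfl⟩ := List.mem_map.1 hy
      exact List.Lex.rel hij

lemma lex_append_of_length_eq {α : Type*} {R : α → α → Prop} {v w : List α}
    (h : List.Lex R v w) (hl : v.length = w.length) (r r' : List α) :
    List.Lex R (v ++ r) (w ++ r') := by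
  induction h with
  | nil => simp at hl
  | rel hab => exact List.Lex.rel hab
  | cons _ ih => exact List.Lex.cons (ih (by simpa using hl))

lemma lex_take_or_take_eq {α : Type*} {R : α → α → Prop} {v w : List α} (h : List.Lex R v w)
    (n : ℕ) : List.Lex R (v.take n) (w.take n) ∨ v.take n = w.take n := by
  induction h generalizing n with
  | nil =>
    cases n with
    | zero => exact Or.inr rfl
    | succ n => exact Or.inl List.Lex.nil
  | rel hab =>
    cases n with
    | zero => exact Or.inr rfl
    | succ n => exact Or.inl (List.Lex.rel hab)
  | cons _ ih =>
    cases n with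
    | zero => exact Or.inr rfl
    | succ n =>
      rcases ih n with h | h
      · exact Or.inl (List.Lex.cons h)
      · exact Or.inr (by simp [h])

lemma one_le_cutLevel (ε : ℝ) (h : ℕ) : 1 ≤ cutLevel ε h := le_max_right _ _

lemma cutLevel_lt {ε : ℝ} (hε : ε < 1) {h : ℕ} (hh : 2 ≤ h) : cutLevel ε h < h := by
  have hh' : (0 : ℝ) < h := by positivity
  have : ⌊ε * (h : ℝ)⌋₊ < h :=
    (Nat.floor_lt' (by omega)).2 (by nlinarith)
  rw [cutLevel]
  omega

section vEBAux

variable (ε : ℝ) (fuel : ℕ) (t : OTree)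

lemma vEBAux_succ_of_height_le_one (h : height t ≤ 1) : vEBAux ε (fuel + 1) t = [[]] := by
  rw [vEBAux, if_pos h]

lemma vEBAux_succ_of_one_lt_height (h : 1 < height t) :
    vEBAux ε (fuel + 1) t =
      vEBAux ε fuel (trunc (cutLevel ε (height t) - 1) t) ++
        ((levelPaths (cutLevel ε (height t)) t).map fun q =>
          match subtreeAt? t q with
          | some s => (vEBAux ε fuel s).map (q ++ ·)
          | none => []).flatten := by
  rw [vEBAux, if_neg (by omega)]

end vEBAux

lemma mem_vEBAux_bottom {ε : ℝ} {fuel : ℕ} {t : OTree} {m : ℕ} {w : List ℕ}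
    (hw : w ∈ ((levelPaths m t).map fun q =>
      match subtreeAt? t q with
      | some s => (vEBAux ε fuel s).map (q ++ ·)
      | none => []).flatten) :
    ∃ q ∈ levelPaths m t, ∃ s, subtreeAt? t q = some s ∧
      ∃ r ∈ vEBAux ε fuel s, w = q ++ r := by
  obtain ⟨l, hl, hwl⟩ := List.mem_flatten.1 hw
  obtain ⟨q, hq, rfl⟩ := List.mem_map.1 hl
  cases hs : subtreeAt? t q with
  | none => simp [hs] at hwl
  | some s =>
    rw [hs] at hwl
    obtain ⟨r, hr, rfl⟩ := List.mem_map.1 hwl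
    exact ⟨q, hq, s, hs, r, hr, rfl⟩

lemma length_lt_height_of_mem_vEBAux {ε : ℝ} {fuel : ℕ} {t : OTree} {p : List ℕ}
    (hp : p ∈ vEBAux ε fuel t) : p.length < height t := by
  induction fuel generalizing t p with
  | zero => simp [vEBAux] at hp
  | succ fuel ih =>
    by_cases hh : height t ≤ 1
    · rw [vEBAux_succ_of_height_le_one ε fuel t hh, List.mem_singleton] at hp
      subst hp
      exact height_pos t
    · rw [vEBAux_succ_of_one_lt_height ε fuel t (by omega), List.mem_append] at hp
      rcases hp with hp | hp
      · exact (ih hp).trans_le (height_trunc_le_height _ t)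
      · obtain ⟨q, hq, s, hs, r, hr, rfl⟩ := mem_vEBAux_bottom hp
        have := ih hr
        have := length_add_height_le hs
        simp only [List.length_append]
        omega

lemma mem_vEBAux {ε : ℝ} (hε : ε < 1) {fuel : ℕ} {t : OTree} {p : List ℕ}
    (hfuel : height t ≤ fuel) (hp : (subtreeAt? t p).isSome) : p ∈ vEBAux ε fuel t := by
  induction fuel generalizing t p with
  | zero => have := height_pos t; omega
  | succ fuel ih =>
    by_cases hh : height t ≤ 1
    · rw [vEBAux_succ_of_height_le_one ε fuel t hh]
      cases p with
      | nil => exact List.mem_singleton_self _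
      | cons i p => simp [subtreeAt?, children_eq_nil_of_height_le_one hh] at hp
    · rw [vEBAux_succ_of_one_lt_height ε fuel t (by omega), List.mem_append]
      have hmh := cutLevel_lt hε (h := height t) (by omega)
      have := one_le_cutLevel ε (height t)
      set m := cutLevel ε (height t)
      by_cases hlen : p.length < m
      · left
        have := height_trunc_le (m - 1) t
        exact ih (by omega) (isSome_subtreeAt?_trunc (by omega) hp)
      · right
        obtain ⟨s, hs⟩ := Option.isSome_iff_exists.1
          (isSome_subtreeAt?_of_prefix (List.take_prefix m p) hp)
        have hqlen : (p.take m).length = m := by rw [List.length_take]; omega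
        have hq : p.take m ∈ levelPaths m t := mem_levelPaths.2 ⟨by simp [hs], hqlen⟩
        have hr : (subtreeAt? s (p.drop m)).isSome := by
          rwa [← List.take_append_drop m p, subtreeAt?_append, hs, Option.bind_some] at hp
        have := length_add_height_le hs
        refine List.mem_flatten.2 ⟨_, List.mem_map_of_mem hq, ?_⟩
        rw [hs]
        exact List.mem_map.2 ⟨p.drop m, ih (by omega) hr, List.take_append_drop m p⟩

lemma mem_vEB {ε : ℝ} (hε : ε < 1) {t : OTree} {p : List ℕ}
    (hp : (subtreeAt? t p).isSome) : p ∈ vEB ε t :=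
  mem_vEBAux hε le_rfl hp

def VEBPrecedes (v w : List ℕ) : Prop :=
  (v <+: w ∨ (¬ w <+: v ∧ List.Lex (· < ·) v w) ∨ v.length < w.length) ∧ v ≠ w

lemma VEBPrecedes.append_left (q : List ℕ) {r r' : List ℕ} (h : VEBPrecedes r r') :
    VEBPrecedes (q ++ r) (q ++ r') := by
  obtain ⟨h | ⟨hnp, hlex⟩ | hlt, hne⟩ := h
  · exact ⟨Or.inl ((List.prefix_append_right_inj q).2 h), by simpa using hne⟩
  · exact ⟨Or.inr (Or.inl ⟨by rwa [List.prefix_append_right_inj], hlex.append_left _ q⟩),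
      by simpa using hne⟩
  · exact ⟨Or.inr (Or.inr (by simpa using hlt)), by simpa using hne⟩

lemma vEBPrecedes_of_length_lt {v w : List ℕ} (h : v.length < w.length) : VEBPrecedes v w :=
  ⟨Or.inr (Or.inr h), fun hvw => by simp [hvw] at h⟩

lemma vEBPrecedes_append_of_lex {q q' : List ℕ} (hlex : List.Lex (· < ·) q q')
    (hlen : q.length = q'.length) (r r' : List ℕ) : VEBPrecedes (q ++ r) (q' ++ r') := by
  have hne : q ≠ q' := by rintro rfl; exact List.lt_irrefl q hlex
  refine ⟨Or.inr (Or.inl ⟨?_, lex_append_of_length_eq hlex hlen r r'⟩), ?_⟩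
  · rintro ⟨z, hz⟩
    rw [List.append_assoc] at hz
    exact hne (List.append_inj hz hlen.symm).1.symm
  · exact fun h => hne (List.append_inj h hlen).1

lemma pairwise_vEBPrecedes_vEBAux (ε : ℝ) (fuel : ℕ) (t : OTree) :
    (vEBAux ε fuel t).Pairwise VEBPrecedes := by
  induction fuel generalizing t with
  | zero => simp [vEBAux]
  | succ fuel ih =>
    by_cases hh : height t ≤ 1
    · simp [vEBAux_succ_of_height_le_one ε fuel t hh]
    · rw [vEBAux_succ_of_one_lt_height ε fuel t (by omega)]
      set m := cutLevel ε (height t)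
      have hlevel : (levelPaths m t).Pairwise
          (fun q q' => List.Lex (· < ·) q q' ∧ q.length = q'.length) :=
        (pairwise_lex_levelPaths m t).imp_of_mem fun hq hq' hlex =>
          ⟨hlex, by rw [(mem_levelPaths.1 hq).2, (mem_levelPaths.1 hq').2]⟩
      refine List.pairwise_append.2 ⟨ih _, List.pairwise_flatten.2 ⟨?_, ?_⟩, ?_⟩
      · intro l hl
        obtain ⟨q, _, rfl⟩ := List.mem_map.1 hl
        cases subtreeAt? t q with
        | none => exact List.Pairwise.nil
        | some s => exact (ih s).map _ fun _ _ => VEBPrecedes.append_left q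
      · refine hlevel.map _ ?_
        rintro q q' ⟨hlex, hlen⟩ v hv w hw
        cases hs : subtreeAt? t q <;> cases hs' : subtreeAt? t q' <;>
          simp only [hs, hs', List.not_mem_nil] at hv hw
        obtain ⟨r, _, rfl⟩ := List.mem_map.1 hv
        obtain ⟨r', _, rfl⟩ := List.mem_map.1 hw
        exact vEBPrecedes_append_of_lex hlex hlen r r'
      · intro v hv w hw
        have := length_lt_height_of_mem_vEBAux hv
        have := height_trunc_le (m - 1) t
        have := one_le_cutLevel ε (height t)
        obtain ⟨q, hq, s, _, r, _, rfl⟩ := mem_vEBAux_bottom hw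
        have := (mem_levelPaths.1 hq).2
        exact vEBPrecedes_of_length_lt (by simp only [List.length_append]; omega)

lemma not_vEBPrecedes_of_lex_or_eq {u v : List ℕ} (hlen : u.length = v.length)
    (h : List.Lex (· < ·) u v ∨ u = v) : ¬ VEBPrecedes v u := by
  rintro ⟨hvu | ⟨_, hlex⟩ | hlt, hne⟩
  · exact hne (hvu.eq_of_length hlen.symm)
  · rcases h with h | rfl
    · exact Std.Asymm.asymm _ _ h hlex
    · exact hne rfl
  · omega

lemma not_vEBPrecedes_of_prefix {v w : List ℕ} (h : v <+: w) : ¬ VEBPrecedes w v := by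
  rintro ⟨hwv | ⟨hnp, _⟩ | hlt, hne⟩
  · exact hne (hwv.eq_of_length (le_antisymm hwv.length_le h.length_le))
  · exact hnp h
  · exact absurd h.length_le (by omega)

lemma mem_slice_iff {α : Type*} {L : List α} {p : α} {i n : ℕ} :
    p ∈ (L.drop i).take n ↔ ∃ j, ∃ _ : j < L.length, L[j] = p ∧ i ≤ j ∧ j < i + n := by
  constructor
  · intro h
    obtain ⟨j, hj, rfl⟩ := List.getElem_of_mem h
    simp only [List.length_take, List.length_drop] at hj
    exact ⟨i + j, by omega, by simp, by omega, by omega⟩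
  · rintro ⟨j, hj, rfl, hij, hjn⟩
    have hb : j - i < ((L.drop i).take n).length := by simp; omega
    convert List.getElem_mem hb using 1
    simp [show i + (j - i) = j by omega]

lemma mem_slice_of_pairwise {α : Type*} {R : α → α → Prop} {L : List α}
    (hL : L.Pairwise R) {i n : ℕ} {x y z : α} (hx : x ∈ (L.drop i).take n)
    (hz : z ∈ (L.drop i).take n) (hy : y ∈ L) (hyx : ¬ R y x) (hzy : ¬ R z y) :
    y ∈ (L.drop i).take n := by
  obtain ⟨a, ha, rfl, hia, -⟩ := mem_slice_iff.1 hx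
  obtain ⟨b, hb, rfl, -, hbn⟩ := mem_slice_iff.1 hz
  obtain ⟨c, hc, rfl⟩ := List.getElem_of_mem hy
  have hac : a ≤ c := not_lt.1 fun hca => hyx (List.pairwise_iff_getElem.1 hL _ _ hc ha hca)
  have hcb : c ≤ b := not_lt.1 fun hbc => hzy (List.pairwise_iff_getElem.1 hL _ _ hb hc hbc)
  exact mem_slice_iff.2 ⟨c, hc, rfl, by omega, by omega⟩

/-- Among the branches intersecting a memory interval `A`, ordered
left-to-right, the depths of the topmost vertices of the branches contained in `A`
form a non-increasing sequence (stated for any two such branches, the left one `ℓ₁`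
and the right one `ℓ₂`). -/
theorem topmost_depths_antitone
    (ε : ℝ) (hε0 : 0 < ε) (hε1 : ε ≤ 1/2) (t : OTree) (ht : Uniform t)
    (A : Set (List ℕ)) (hA : MemInterval ε t A)
    (ℓ₁ ℓ₂ : List ℕ) (h1 : IsLeaf t ℓ₁) (h2 : IsLeaf t ℓ₂)
    (hord : List.Lex (· < ·) ℓ₁ ℓ₂)
    (hint1 : ∃ n, n ≤ ℓ₁.length ∧ ℓ₁.take n ∈ A)
    (hint2 : ∃ n, n ≤ ℓ₂.length ∧ ℓ₂.take n ∈ A) :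
    sInf {n | n ≤ ℓ₂.length ∧ ℓ₂.take n ∈ A}
      ≤ sInf {n | n ≤ ℓ₁.length ∧ ℓ₁.take n ∈ A} := by
  obtain ⟨i, k, hA⟩ := hA
  set d₁ := sInf {n | n ≤ ℓ₁.length ∧ ℓ₁.take n ∈ A}
  set d₂ := sInf {n | n ≤ ℓ₂.length ∧ ℓ₂.take n ∈ A}
  obtain ⟨hd₁, hx⟩ : d₁ ≤ ℓ₁.length ∧ ℓ₁.take d₁ ∈ A := Nat.sInf_mem hint1
  obtain ⟨hd₂, hz⟩ : d₂ ≤ ℓ₂.length ∧ ℓ₂.take d₂ ∈ A := Nat.sInf_mem hint2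
  by_contra! hlt
  rw [hA] at hx hz
  have hy : ℓ₂.take d₁ ∈ vEB ε t :=
    mem_vEB (by linarith) (isSome_subtreeAt?_of_prefix (List.take_prefix d₁ ℓ₂) (by rw [h2]; rfl))
  have hy_mem : ℓ₂.take d₁ ∈ A := by
    rw [hA]
    refine mem_slice_of_pairwise (pairwise_vEBPrecedes_vEBAux ε _ t) hx hz hy ?_ ?_
    · refine not_vEBPrecedes_of_lex_or_eq ?_ (lex_take_or_take_eq hord d₁)
      simp only [List.length_take]
      omega
    · exact not_vEBPrecedes_of_prefix (List.take_prefix_take_left hlt.le)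
  exact hlt.not_ge (Nat.sInf_le ⟨by omega, hy_mem⟩)

end VEB
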